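/- If x₀ ∈ X₀ (the ROA), then V(x₀) ≥ e^{-βτ*} > 0 where τ* < ∞ is any admissible time at which the target is reached; conversely if no admissible trajectory from x₀ reaches X_T and x₀ admits a trajectory staying in X forever, then V(x₀) = 0. -/
import Mathlib


open Set Real

variable {n m : ℕ}

/-- The set of admissible trajectory–control pairs on `[0,τ]` from `x₀`. -/
def Admissible (f : EuclideanSpace ℝ (Fin n) → EuclideanSpace ℝ (Fin n))
    (G : EuclideanSpace ℝ (Fin n) → Fin m → EuclideanSpace ℝ (Fin n))
    (ub : ℝ) (X : Set (EuclideanSpace ℝ (Fin n)))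
    (x₀ : EuclideanSpace ℝ (Fin n)) (τ : ℝ)
    (u : ℝ → Fin m → ℝ) (x : ℝ → EuclideanSpace ℝ (Fin n)) : Prop :=
  (∀ t ∈ Icc (0:ℝ) τ, HasDerivAt x (f (x t) + ∑ i, u t i • G (x t) i) t) ∧
  (∀ t ∈ Icc (0:ℝ) τ, x t ∈ X ∧ ∀ i, u t i ∈ Icc (0:ℝ) ub) ∧ x 0 = x₀

/-- Attainable values of the optimal control problem (7): either stop at a finite
time `τ` with reward `e^{-βτ}(1_{X_T}(x(τ)) − 1_{X∖X_T}(x(τ)))`, or stay in `X`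
forever (`τ = ∞`) with value `0`. -/
def Vals (f : EuclideanSpace ℝ (Fin n) → EuclideanSpace ℝ (Fin n))
    (G : EuclideanSpace ℝ (Fin n) → Fin m → EuclideanSpace ℝ (Fin n))
    (ub : ℝ) (X XT : Set (EuclideanSpace ℝ (Fin n))) (β : ℝ)
    (x₀ : EuclideanSpace ℝ (Fin n)) : Set ℝ :=
  {r | (∃ τ : ℝ, 0 ≤ τ ∧ ∃ u x, Admissible f G ub X x₀ τ u x ∧
          r = Real.exp (-β * τ) *
            (Set.indicator XT (fun _ => (1:ℝ)) (x τ) - Set.indicator (X \ XT) (fun _ => (1:ℝ)) (x τ)))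
      ∨ (r = 0 ∧ ∃ u : ℝ → Fin m → ℝ, ∃ x : ℝ → EuclideanSpace ℝ (Fin n), (∀ t : ℝ, 0 ≤ t →
            HasDerivAt x (f (x t) + ∑ i, u t i • G (x t) i) t ∧
            x t ∈ X ∧ ∀ i, u t i ∈ Icc (0:ℝ) ub) ∧ x 0 = x₀)}

/-- The region of attraction of `XT`. -/
def ROA (f : EuclideanSpace ℝ (Fin n) → EuclideanSpace ℝ (Fin n))
    (G : EuclideanSpace ℝ (Fin n) → Fin m → EuclideanSpace ℝ (Fin n))
    (ub : ℝ) (X XT : Set (EuclideanSpace ℝ (Fin n))) :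
    Set (EuclideanSpace ℝ (Fin n)) :=
  {x₀ | ∃ τ : ℝ, 0 ≤ τ ∧ ∃ u x, Admissible f G ub X x₀ τ u x ∧ x τ ∈ XT}

/-- The two directions of the value-function characterization of the ROA:
if `x₀` can be admissibly steered to `X_T` at time `τ*`, then
`V(x₀) ≥ e^{-βτ*} > 0`; if no admissible trajectory from `x₀` reaches `X_T` while
some admissible trajectory stays in `X` forever, then `V(x₀) = 0`. -/
theorem value_function_two_directions
    (f : EuclideanSpace ℝ (Fin n) → EuclideanSpace ℝ (Fin n))
    (G : EuclideanSpace ℝ (Fin n) → Fin m → EuclideanSpace ℝ (Fin n))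
    (ub : ℝ) (hub : 0 ≤ ub)
    (X XT : Set (EuclideanSpace ℝ (Fin n))) (hXT : XT ⊆ X)
    (β : ℝ) (hβ : 0 < β) (x₀ : EuclideanSpace ℝ (Fin n)) :
    (∀ τstar : ℝ, 0 ≤ τstar →
      (∃ u x, Admissible f G ub X x₀ τstar u x ∧ x τstar ∈ XT) →
      Real.exp (-β * τstar) ≤ sSup (Vals f G ub X XT β x₀) ∧
        0 < sSup (Vals f G ub X XT β x₀)) ∧
    ((¬ x₀ ∈ ROA f G ub X XT) →
      (∃ u : ℝ → Fin m → ℝ, ∃ x : ℝ → EuclideanSpace ℝ (Fin n),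
        (∀ t : ℝ, 0 ≤ t →
          HasDerivAt x (f (x t) + ∑ i, u t i • G (x t) i) t ∧
          x t ∈ X ∧ ∀ i, u t i ∈ Icc (0:ℝ) ub) ∧ x 0 = x₀) →
      sSup (Vals f G ub X XT β x₀) = 0) := by
  have hbdd : BddAbove (Vals f G ub X XT β x₀) := by
    refine ⟨1, fun r hr => ?_⟩
    rcases hr with ⟨τ, hτ, u, x, hadm, hr⟩ | ⟨hr, _⟩
    · have he : Real.exp (-β * τ) ≤ 1 := by
        apply Real.exp_le_one_iff.mpr
        nlinarith
      have ha : Set.indicator XT (fun _ => (1:ℝ)) (x τ) ≤ 1 := by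
        by_cases h : x τ ∈ XT
        · rw [Set.indicator_of_mem h]
        · rw [Set.indicator_of_notMem h]; norm_num
      have hb : 0 ≤ Set.indicator (X \ XT) (fun _ => (1:ℝ)) (x τ) := by
        by_cases h : x τ ∈ X \ XT
        · rw [Set.indicator_of_mem h]; norm_num
        · rw [Set.indicator_of_notMem h]
      rw [hr]
      have : Set.indicator XT (fun _ => (1:ℝ)) (x τ) -
          Set.indicator (X \ XT) (fun _ => (1:ℝ)) (x τ) ≤ 1 := by linarith
      nlinarith [Real.exp_pos (-β * τ)]
    · linarith
  constructor
  · rintro τ hτ ⟨u, x, hadm, hxτ⟩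
    have hmem : Real.exp (-β * τ) ∈ Vals f G ub X XT β x₀ := by
      left
      refine ⟨τ, hτ, u, x, hadm, ?_⟩
      rw [Set.indicator_of_mem hxτ, Set.indicator_of_notMem (fun h => h.2 hxτ)]
      ring
    have hle := le_csSup hbdd hmem
    exact ⟨hle, lt_of_lt_of_le (Real.exp_pos _) hle⟩
  · rintro hnot ⟨u, x, hx⟩
    have h0 : (0:ℝ) ∈ Vals f G ub X XT β x₀ := Or.inr ⟨rfl, u, x, hx⟩
    refine le_antisymm (csSup_le ⟨0, h0⟩ ?_) (le_csSup hbdd h0)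
    rintro r (⟨τ, hτ, u', x', hadm, hr⟩ | ⟨hr, _⟩)
    · have hxτX : x' τ ∈ X := (hadm.2.1 τ ⟨hτ, le_refl τ⟩).1
      have hxτ : x' τ ∉ XT := fun h => hnot ⟨τ, hτ, u', x', hadm, h⟩
      rw [hr, Set.indicator_of_notMem hxτ, Set.indicator_of_mem (Set.mem_diff_of_mem hxτX hxτ)]
      nlinarith [Real.exp_pos (-β * τ)]
    · exact le_of_eq hr
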